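/- Let k ≥ 2 and let A_0, A_1, …, A_{k−1} be analytic functions in the unit disc Δ. Then every non-trivial solution f of the equation f^{(k)} + A_{k−1}(z)f^{(k−1)} + ⋯ + A_1(z)f′ + A_0(z)f = 0 satisfies ϱ_{(α(log),β,γ),M}[f] ≤ max{ϱ_{(α,β,γ),M}[A_j] : j = 0, …, k−1}. -/

import Mathlib

open Filter Topology MeasureTheory Asymptotics

/-- The maximum modulus `M(r,f) = max_{|z|=r} |f(z)|`. -/
noncomputable def maxMod (f : ℂ → ℂ) (r : ℝ) : ℝ :=
  sSup ((fun z => ‖f z‖) '' Metric.sphere (0 : ℂ) r)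

/-- `log⁺ x = max(0, log x)`. -/
noncomputable def logPlus (x : ℝ) : ℝ := max 0 (Real.log x)

/-- The Nevanlinna proximity function
`m(r,f) = (1/2π) ∫_0^{2π} log⁺ |f(r e^{iθ})| dθ`. -/
noncomputable def proxFun (f : ℂ → ℂ) (r : ℝ) : ℝ :=
  (2 * Real.pi)⁻¹ *
    ∫ θ in (0:ℝ)..(2 * Real.pi), logPlus ‖f ((r : ℂ) * Complex.exp (θ * Complex.I))‖

/-- The order of the pole of `f` at `z` (zero if `f` has no pole there). -/
noncomputable def poleOrder (f : ℂ → ℂ) (z : ℂ) : ℕ :=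
  @dite _ (MeromorphicAt f z) (Classical.dec _)
    (fun _ => (-(WithTop.untopD 0 (meromorphicOrderAt f z))).toNat) (fun _ => 0)

/-- `n(t,f)`: the number of poles of `f` in `|z| ≤ t`, counted with multiplicity. -/
noncomputable def poleCount (f : ℂ → ℂ) (t : ℝ) : ℝ :=
  ∑' z : (Metric.closedBall (0:ℂ) t), (poleOrder f z : ℝ)

/-- The integrated counting function
`N(r,f) = ∫_0^r (n(t,f) - n(0,f))/t dt + n(0,f) log r`. -/
noncomputable def countFun (f : ℂ → ℂ) (r : ℝ) : ℝ :=
  (∫ t in (0:ℝ)..r, (poleCount f t - poleCount f 0) / t) + poleCount f 0 * Real.log r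

/-- The Nevanlinna characteristic `T(r,f) = m(r,f) + N(r,f)`. -/
noncomputable def charT (f : ℂ → ℂ) (r : ℝ) : ℝ := proxFun f r + countFun f r

/-- The class `L` of growth functions. -/
def ClassL (a : ℝ → ℝ) : Prop :=
  Continuous a ∧ (∀ x, 0 ≤ a x) ∧ Monotone a ∧
    (∃ x₀, ∀ x ≤ x₀, a x = a x₀) ∧ Filter.Tendsto a Filter.atTop Filter.atTop

/-- `α ∈ L₁` : `α ∈ L` and `α(a+b) ≤ α(a)+α(b)+c` for all `a,b ≥ R₀`. -/
def ClassL1 (a : ℝ → ℝ) : Prop :=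
  ClassL a ∧ ∃ c > (0:ℝ), ∃ R₀ : ℝ, ∀ x ≥ R₀, ∀ y ≥ R₀, a (x + y) ≤ a x + a y + c

/-- `β ∈ L₂` : `β ∈ L` and `β(x+O(1)) = (1+o(1)) β(x)` as `x → +∞`. -/
def ClassL2 (b : ℝ → ℝ) : Prop :=
  ClassL b ∧ ∀ C : ℝ, Filter.Tendsto (fun x => b (x + C) / b x) Filter.atTop (nhds 1)

/-- `γ ∈ L₃` : `γ ∈ L` and `γ` is subadditive. -/
def ClassL3 (g : ℝ → ℝ) : Prop :=
  ClassL g ∧ ∃ R₀ : ℝ, ∀ x ≥ R₀, ∀ y ≥ R₀, g (x + y) ≤ g x + g y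

/-- The standing hypotheses on the growth scale functions `α, β, γ`:
`α ∈ L₁`, `β ∈ L₂`, `γ ∈ L₃`, `α(log^[p] x) = o(β(log γ(x)))` for `p ≥ 2`,
`α(log x) = o(α(x))`, and `α⁻¹(kx) = o(α⁻¹(x))` for each fixed `0 ≤ k < 1`. -/
def GrowthScale (a b g : ℝ → ℝ) : Prop :=
  ClassL1 a ∧ ClassL2 b ∧ ClassL3 g ∧
    (∀ p : ℕ, 2 ≤ p →
      (fun x => a (Real.log^[p] x)) =o[Filter.atTop] fun x => b (Real.log (g x))) ∧
    ((fun x => a (Real.log x)) =o[Filter.atTop] a) ∧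
    (∀ k : ℝ, 0 ≤ k → k < 1 →
      (fun x => Function.invFun a (k * x)) =o[Filter.atTop] fun x => Function.invFun a x)

/-- The comparison denominator `β(log γ(1/(1-r)))`. -/
noncomputable def betaDen (b g : ℝ → ℝ) (r : ℝ) : ℝ := b (Real.log (g (1 / (1 - r))))

/-- The `(α,β,γ)`-order of an analytic function in the unit disc,
defined via the maximum modulus. -/
noncomputable def orderM (a b g : ℝ → ℝ) (f : ℂ → ℂ) : EReal :=
  Filter.limsup
    (fun r : ℝ => ((a (Real.log (Real.log (maxMod f r))) / betaDen b g r : ℝ) : EReal))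
    (𝓝[<] (1:ℝ))

/-- The `(α(log),β,γ)`-order of an analytic function in the unit disc,
defined via the maximum modulus. -/
noncomputable def orderLogM (a b g : ℝ → ℝ) (f : ℂ → ℂ) : EReal :=
  Filter.limsup
    (fun r : ℝ =>
      ((a (Real.log (Real.log (Real.log (maxMod f r)))) / betaDen b g r : ℝ) : EReal))
    (𝓝[<] (1:ℝ))

/-- The `(α,β,γ)`-order of a meromorphic function in the unit disc,
defined via the Nevanlinna characteristic. -/
noncomputable def orderT (a b g : ℝ → ℝ) (f : ℂ → ℂ) : EReal :=
  Filter.limsup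
    (fun r : ℝ => ((a (Real.log (charT f r)) / betaDen b g r : ℝ) : EReal))
    (𝓝[<] (1:ℝ))

/-- The `(α(log),β,γ)`-order of a meromorphic function in the unit disc,
defined via the Nevanlinna characteristic. -/
noncomputable def orderLogT (a b g : ℝ → ℝ) (f : ℂ → ℂ) : EReal :=
  Filter.limsup
    (fun r : ℝ => ((a (Real.log (Real.log (charT f r))) / betaDen b g r : ℝ) : EReal))
    (𝓝[<] (1:ℝ))

/-- The `(α,β,γ)`-type (with order value `rho`) of an analytic function in the
unit disc, defined via the maximum modulus. -/
noncomputable def typeM (a b g : ℝ → ℝ) (rho : ℝ) (f : ℂ → ℂ) : EReal :=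
  Filter.limsup
    (fun r : ℝ =>
      ((Real.exp (a (Real.log (Real.log (maxMod f r)))) /
        (Real.exp (betaDen b g r)) ^ rho : ℝ) : EReal))
    (𝓝[<] (1:ℝ))

/-- A set `F ⊂ [0,1)` has finite logarithmic measure if `∫_F dr/(1-r) < ∞`. -/
def FiniteLogMeasure (F : Set ℝ) : Prop :=
  ∫⁻ r in F, ENNReal.ofReal (1 / (1 - r)) < ⊤

/-- A set `F ⊂ [0,1)` has infinite logarithmic measure if `∫_F dr/(1-r) = ∞`. -/
def InfiniteLogMeasure (F : Set ℝ) : Prop :=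
  ∫⁻ r in F, ENNReal.ofReal (1 / (1 - r)) = ⊤

/-- `f` is a solution, analytic on the unit disc, of the linear differential
equation `f^{(k)} + A_{k-1} f^{(k-1)} + ⋯ + A_1 f' + A_0 f = 0`. -/
def IsSolution (k : ℕ) (A : ℕ → ℂ → ℂ) (f : ℂ → ℂ) : Prop :=
  AnalyticOnNhd ℂ f (Metric.ball (0:ℂ) 1) ∧
    ∀ z ∈ Metric.ball (0:ℂ) 1,
      iteratedDeriv k f z + ∑ j ∈ Finset.range k, A j z * iteratedDeriv j f z = 0

/-!
Write the equation as a first-order linear system for the jet `(f, f', …, f^{(k-1)})` along the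
segment `[0, z]`. Gronwall's inequality then gives `log M(r,f) = O(1 + max_j M(r,A_j))`, and after
two more logarithms the `L₁` property `α(x + O(1)) ≤ α(x) + O(1)` bounds the numerator of
`ϱ_{(α(log),β,γ),M}[f]` by the numerator of some `ϱ_{(α,β,γ),M}[A_j]` plus a constant.

If instead `M(r,f) ≤ 1` for all `r`, the iterated logarithms are those of numbers in `(0,1]`
(`Real.log` takes `log |x|`). Either `f` is a unimodular constant, or the Schwarz–Pick lemma gives
`1 - M(r,f) ≥ c (1 - r)`; then the numerator is `α(log log (1/(1-r))) + O(1)`, which is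
`o(β(log γ(1/(1-r))))` by the standing hypothesis with `p = 2`.
-/

open Real Set Metric

section MaxModulus

variable {f : ℂ → ℂ} {r : ℝ}

lemma maxMod_nonneg (f : ℂ → ℂ) (r : ℝ) : 0 ≤ maxMod f r :=
  Real.sSup_nonneg <| by rintro _ ⟨z, -, rfl⟩; exact norm_nonneg _

lemma maxMod_le {C : ℝ} (hC : 0 ≤ C) (h : ∀ z : ℂ, ‖z‖ = r → ‖f z‖ ≤ C) : maxMod f r ≤ C :=
  Real.sSup_le (by rintro _ ⟨z, hz, rfl⟩; exact h z (mem_sphere_zero_iff_norm.1 hz)) hC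

lemma norm_le_maxMod (hf : DifferentiableOn ℂ f (ball 0 1)) (hr0 : 0 < r) (hr1 : r < 1)
    {w : ℂ} (hw : ‖w‖ ≤ r) : ‖f w‖ ≤ maxMod f r := by
  have hsub : closedBall (0 : ℂ) r ⊆ ball 0 1 := closedBall_subset_ball hr1
  have hbdd : BddAbove ((fun z => ‖f z‖) '' sphere (0 : ℂ) r) :=
    ((isCompact_sphere 0 r).image_of_continuousOn
      (hf.continuousOn.mono (sphere_subset_closedBall.trans hsub)).norm).bddAbove
  refine Complex.norm_le_of_forall_mem_frontier_norm_le isBounded_ball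
    ⟨hf.mono (ball_subset_ball hr1.le), ?_⟩ (fun z hz => ?_) ?_
  · rw [closure_ball 0 hr0.ne']
    exact hf.continuousOn.mono hsub
  · rw [frontier_ball 0 hr0.ne'] at hz
    exact le_csSup hbdd ⟨z, hz, rfl⟩
  · rw [closure_ball 0 hr0.ne']
    exact mem_closedBall_zero_iff.2 hw

lemma maxMod_mono (hf : DifferentiableOn ℂ f (ball 0 1)) {s : ℝ} (hr0 : 0 < r) (hrs : r ≤ s)
    (hs1 : s < 1) : maxMod f r ≤ maxMod f s :=
  maxMod_le (maxMod_nonneg f s) fun _ hz =>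
    norm_le_maxMod hf (hr0.trans_le hrs) hs1 (hz.trans_le hrs)

lemma maxMod_eq_one (h : ∀ z ∈ ball (0 : ℂ) 1, ‖f z‖ = 1) (hr0 : 0 < r) (hr1 : r < 1) :
    maxMod f r = 1 := by
  have hsphere : ((fun z => ‖f z‖) '' sphere (0 : ℂ) r) = {1} :=
    (Set.image_congr fun z hz => h z (sphere_subset_ball hr1 hz)).trans
      ((NormedSpace.sphere_nonempty.2 hr0.le).image_const 1)
  rw [maxMod, hsphere, csSup_singleton]

end MaxModulus

section SchwarzPick

open ComplexConjugate

lemma norm_one_sub_conj_mul_sq_sub_norm_sub_sq (p q : ℂ) :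
    ‖1 - conj q * p‖ ^ 2 - ‖p - q‖ ^ 2 = (1 - ‖q‖ ^ 2) * (1 - ‖p‖ ^ 2) := by
  simp only [Complex.sq_norm, Complex.normSq_apply, Complex.sub_re, Complex.sub_im,
    Complex.mul_re, Complex.mul_im, Complex.one_re, Complex.one_im, Complex.conj_re,
    Complex.conj_im]
  ring

lemma sq_one_sub_norm_mul_le_of_mapsTo_ball {f : ℂ → ℂ} (hd : DifferentiableOn ℂ f (ball 0 1))
    (hm : MapsTo f (ball 0 1) (ball 0 1)) {z : ℂ} (hz : ‖z‖ < 1) :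
    (1 - ‖f 0‖) ^ 2 * (1 - ‖z‖) ≤ 2 * (1 - ‖f z‖) := by
  set w := f 0
  have hfball : ∀ ζ ∈ ball (0 : ℂ) 1, ‖f ζ‖ < 1 := fun ζ hζ => mem_ball_zero_iff.1 (hm hζ)
  have hw : ‖w‖ < 1 := hfball 0 (mem_ball_self one_pos)
  have hden : ∀ ζ ∈ ball (0 : ℂ) 1, 1 - ‖w‖ ≤ ‖1 - conj w * f ζ‖ := fun ζ hζ => by
    have : ‖conj w * f ζ‖ ≤ ‖w‖ := by
      rw [norm_mul, Complex.norm_conj]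
      exact mul_le_of_le_one_right (norm_nonneg w) (hfball ζ hζ).le
    linarith [norm_sub_norm_le (1 : ℂ) (conj w * f ζ), norm_one (α := ℂ)]
  have hden0 : ∀ ζ ∈ ball (0 : ℂ) 1, 1 - conj w * f ζ ≠ 0 := fun ζ hζ =>
    norm_pos_iff.1 ((sub_pos.2 hw).trans_le (hden ζ hζ))
  -- `G` is `f` followed by the disc automorphism sending `f 0` to `0`, so Schwarz's lemma applies
  set G : ℂ → ℂ := fun ζ => (f ζ - w) / (1 - conj w * f ζ)
  have hkey : ∀ ζ, ‖1 - conj w * f ζ‖ ^ 2 - ‖f ζ - w‖ ^ 2 = (1 - ‖w‖ ^ 2) * (1 - ‖f ζ‖ ^ 2) :=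
    fun ζ => norm_one_sub_conj_mul_sq_sub_norm_sub_sq (f ζ) w
  have hG : MapsTo G (ball 0 1) (closedBall 0 1) := fun ζ hζ => by
    have hpos : 0 ≤ (1 - ‖w‖ ^ 2) * (1 - ‖f ζ‖ ^ 2) := by
      have := hfball ζ hζ
      apply mul_nonneg <;> nlinarith [norm_nonneg w, norm_nonneg (f ζ)]
    rw [mem_closedBall_zero_iff, norm_div, div_le_one (norm_pos_iff.2 (hden0 ζ hζ)),
      ← sq_le_sq₀ (norm_nonneg _) (norm_nonneg _)]
    linarith [hkey ζ]
  have hzball : z ∈ ball (0 : ℂ) 1 := mem_ball_zero_iff.2 hz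
  have hGz : ‖G z‖ ≤ ‖z‖ :=
    Complex.norm_le_norm_of_mapsTo_ball
      (hd.sub_const w |>.div ((differentiableOn_const 1).sub (hd.const_mul _)) hden0) hG
      (by simp [G, w]) hz
  have hfz : ‖f z - w‖ = ‖G z‖ * ‖1 - conj w * f z‖ := by
    rw [← norm_mul, div_mul_cancel₀ _ (hden0 z hzball)]
  have hwz := hfball z hzball
  have hD := hden z hzball
  calc (1 - ‖w‖) ^ 2 * (1 - ‖z‖)
      ≤ ‖1 - conj w * f z‖ ^ 2 * (1 - ‖G z‖ ^ 2) := by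
        gcongr
        nlinarith [mul_le_mul hGz hGz (norm_nonneg _) (norm_nonneg _),
          mul_nonneg (norm_nonneg z) (sub_nonneg.2 hz.le)]
    _ = (1 - ‖w‖ ^ 2) * (1 - ‖f z‖ ^ 2) := by rw [← hkey z, hfz]; ring
    _ ≤ 2 * (1 - ‖f z‖) := by
        have : 0 ≤ 1 - ‖f z‖ ^ 2 := by nlinarith [norm_nonneg (f z)]
        nlinarith [mul_nonneg (sq_nonneg ‖w‖) this, norm_nonneg (f z)]

end SchwarzPick

section LinearODE

open Finset

variable {k : ℕ} {A : ℕ → ℂ → ℂ} {f : ℂ → ℂ}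

noncomputable def jet (k : ℕ) (f : ℂ → ℂ) (z : ℂ) : Fin k → ℂ := fun i => iteratedDeriv i f z

lemma IsSolution.norm_iteratedDeriv_succ_le (hf : IsSolution k A f) {z : ℂ} (hz : z ∈ ball 0 1)
    (i : Fin k) :
    ‖iteratedDeriv (i + 1) f z‖ ≤ (1 + ∑ j ∈ range k, ‖A j z‖) * ‖jet k f z‖ := by
  have hS : 0 ≤ ∑ j ∈ range k, ‖A j z‖ := sum_nonneg fun _ _ => norm_nonneg _
  rcases (Nat.succ_le_of_lt i.isLt).lt_or_eq with hlt | heq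
  · calc ‖iteratedDeriv (i + 1) f z‖ = ‖jet k f z ⟨i + 1, hlt⟩‖ := rfl
      _ ≤ ‖jet k f z‖ := norm_le_pi_norm _ _
      _ ≤ _ := le_mul_of_one_le_left (norm_nonneg _) (by linarith)
  · have hode : iteratedDeriv k f z = -∑ j ∈ range k, A j z * iteratedDeriv j f z :=
      eq_neg_of_add_eq_zero_left (hf.2 z hz)
    rw [show (i : ℕ) + 1 = k from heq, hode, norm_neg]
    calc ‖∑ j ∈ range k, A j z * iteratedDeriv j f z‖
        ≤ ∑ j ∈ range k, ‖A j z‖ * ‖jet k f z‖ :=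
          (norm_sum_le _ _).trans <| sum_le_sum fun j hj => by
            rw [norm_mul]
            exact mul_le_mul_of_nonneg_left
              (norm_le_pi_norm (jet k f z) ⟨j, mem_range.1 hj⟩) (norm_nonneg _)
      _ ≤ (1 + ∑ j ∈ range k, ‖A j z‖) * ‖jet k f z‖ := by
          rw [← sum_mul]
          gcongr
          linarith

lemma IsSolution.norm_jet_le (hf : IsSolution k A f) {z : ℂ} (hz : z ∈ ball 0 1) {K : ℝ}
    (hK : ∀ t ∈ Icc (0 : ℝ) 1, ‖z‖ * (1 + ∑ j ∈ range k, ‖A j (t • z)‖) ≤ K) :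
    ‖jet k f z‖ ≤ ‖jet k f 0‖ * exp K := by
  have hseg : ∀ t ∈ Icc (0 : ℝ) 1, t • z ∈ ball (0 : ℂ) 1 := fun t ht => by
    rw [mem_ball_zero_iff, norm_smul, Real.norm_of_nonneg ht.1]
    exact (mul_le_of_le_one_left (norm_nonneg z) ht.2).trans_lt (mem_ball_zero_iff.1 hz)
  have hK0 : 0 ≤ K := by
    refine le_trans ?_ (hK 0 ⟨le_rfl, zero_le_one⟩)
    have : 0 ≤ ∑ j ∈ range k, ‖A j ((0 : ℝ) • z)‖ := sum_nonneg fun _ _ => norm_nonneg _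
    positivity
  set v : ℝ → Fin k → ℂ := fun t => jet k f (t • z)
  set v' : ℝ → Fin k → ℂ := fun t i => z * iteratedDeriv (i + 1) f (t • z)
  have hv : ∀ t ∈ Icc (0 : ℝ) 1, HasDerivAt v (v' t) t := fun t ht => by
    refine hasDerivAt_pi.2 fun i => ?_
    have hline : HasDerivAt (fun s : ℝ => s • z) z t := by
      simpa using (hasDerivAt_id t).smul_const z
    have hderiv := (hf.1.iterated_deriv i (t • z) (hseg t ht)).differentiableAt.hasDerivAt
    rw [← iteratedDeriv_eq_iterate, ← iteratedDeriv_succ] at hderiv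
    exact hderiv.scomp t hline
  have hv' : ∀ t ∈ Ico (0 : ℝ) 1, ‖v' t‖ ≤ K * ‖v t‖ + 0 := fun t ht => by
    have ht' := Ico_subset_Icc_self ht
    rw [add_zero, pi_norm_le_iff_of_nonneg (by positivity)]
    intro i
    calc ‖v' t i‖ = ‖z‖ * ‖iteratedDeriv (i + 1) f (t • z)‖ := norm_mul _ _
      _ ≤ ‖z‖ * ((1 + ∑ j ∈ range k, ‖A j (t • z)‖) * ‖v t‖) :=
          mul_le_mul_of_nonneg_left (hf.norm_iteratedDeriv_succ_le (hseg t ht') i) (norm_nonneg z)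
      _ ≤ K * ‖v t‖ := by rw [← mul_assoc]; gcongr; exact hK t ht'
  have hgronwall := norm_le_gronwallBound_of_norm_deriv_right_le
    (fun t ht => (hv t ht).continuousAt.continuousWithinAt)
    (fun t ht => (hv t (Ico_subset_Icc_self ht)).hasDerivWithinAt) le_rfl hv' 1
    ⟨zero_le_one, le_rfl⟩
  simpa [v, gronwallBound_ε0] using hgronwall

lemma IsSolution.maxMod_le (hk : 0 < k) (hA : ∀ j < k, DifferentiableOn ℂ (A j) (ball 0 1))
    (hf : IsSolution k A f) {r : ℝ} (hr0 : 0 < r) (hr1 : r < 1) :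
    maxMod f r ≤ ‖jet k f 0‖ * exp (1 + ∑ j ∈ range k, maxMod (A j) r) := by
  refine _root_.maxMod_le (by positivity) fun z hz => ?_
  have hzball : z ∈ ball (0 : ℂ) 1 := mem_ball_zero_iff.2 (hz.trans_lt hr1)
  refine (norm_le_pi_norm (jet k f z) ⟨0, hk⟩).trans (hf.norm_jet_le hzball fun t ht => ?_)
  have htz : ‖t • z‖ ≤ r := by
    rw [norm_smul, Real.norm_of_nonneg ht.1, hz]
    exact mul_le_of_le_one_left hr0.le ht.2
  calc ‖z‖ * (1 + ∑ j ∈ range k, ‖A j (t • z)‖) ≤ 1 * (1 + ∑ j ∈ range k, maxMod (A j) r) := by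
        gcongr with j hj
        · exact hz.trans_le hr1.le
        · exact norm_le_maxMod (hA j (mem_range.1 hj)) hr0 hr1 htz
    _ = 1 + ∑ j ∈ range k, maxMod (A j) r := one_mul _

end LinearODE

section IteratedLogarithms

lemma log_le_log_add_log_of_abs_le_mul {x c T : ℝ} (hc : 1 ≤ c) (hT : 1 ≤ T)
    (h : |x| ≤ c * T) : log x ≤ log c + log T := by
  rw [← log_mul (by positivity) (by positivity), ← log_abs x]
  rcases eq_or_ne x 0 with rfl | hx
  · simpa using log_nonneg (one_le_mul_of_one_le_of_one_le hc hT)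
  · exact log_le_log (abs_pos.2 hx) h

lemma log_log_log_le_of_log_le_mul {δ K W m : ℝ} (hδ : 1 < δ) (hK : 1 ≤ K) (hW : exp 1 ≤ W)
    (hδm : δ ≤ m) (hm : log m ≤ K * W) :
    log (log (log m)) ≤ log (|log (log δ)| + log K + 1) + log (log W) := by
  have hW1 : 1 ≤ log W := by simpa using log_le_log (exp_pos 1) hW
  have hK0 : 0 ≤ log K := log_nonneg hK
  have hlogδ : 0 < log δ := log_pos hδ
  have hlogm : log δ ≤ log m := log_le_log (by linarith) hδm
  refine log_le_log_add_log_of_abs_le_mul (by linarith [abs_nonneg (log (log δ))]) hW1 ?_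
  rw [abs_le]
  constructor
  · have : log (log δ) ≤ log (log m) := log_le_log hlogδ hlogm
    nlinarith [neg_abs_le (log (log δ)), abs_nonneg (log (log δ))]
  · have : log (log m) ≤ log K + log W := by
      rw [← log_mul (zero_lt_one.trans_le hK).ne' ((exp_pos 1).trans_le hW).ne']
      exact log_le_log (hlogδ.trans_le hlogm) hm
    nlinarith [abs_nonneg (log (log δ))]

lemma log_log_log_le_of_le_one_sub_mul {m₀ c t m : ℝ} (hm₀ : 0 < m₀) (hc : 0 < c) (ht : 0 < t)
    (ht1 : t ≤ exp (-1)) (hm₀m : m₀ ≤ m) (hm : m ≤ 1 - c * t) :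
    log (log (log m)) ≤ log (|log c| + |log (-log m₀)| + 1) + log (log (1 / t)) := by
  have hT : 1 ≤ log (1 / t) := by
    rw [one_div, log_inv, le_neg, ← log_exp (-1)]
    exact log_le_log ht ht1
  have hm0 : 0 < m := hm₀.trans_le hm₀m
  -- `log m ≤ m - 1 ≤ -c t`, so `log (log m) = log (-log m)` is trapped between
  -- `log (c t)` and `log (-log m₀)`
  have hupper : c * t ≤ -log m := by linarith [log_le_sub_one_of_pos hm0]
  have hct : 0 < c * t := by positivity
  rw [← log_neg_eq_log (log m)]
  refine log_le_log_add_log_of_abs_le_mul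
    (by linarith [abs_nonneg (log c), abs_nonneg (log (-log m₀))]) hT ?_
  rw [abs_le]
  constructor
  · have : log (c * t) ≤ log (-log m) := log_le_log hct hupper
    rw [log_mul hc.ne' ht.ne', ← neg_neg (log t), ← log_inv, ← one_div] at this
    nlinarith [neg_abs_le (log c), abs_nonneg (log c), abs_nonneg (log (-log m₀))]
  · have : log (-log m) ≤ log (-log m₀) :=
      log_le_log (hct.trans_le hupper) (by linarith [log_le_log hm₀ hm₀m])
    nlinarith [le_abs_self (log (-log m₀)), abs_nonneg (log c), abs_nonneg (log (-log m₀))]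

end IteratedLogarithms

section GrowthScale

variable {a : ℝ → ℝ}

lemma ClassL1.exists_add_le (ha : ClassL1 a) (C : ℝ) : ∃ D, ∀ x, a (C + x) ≤ a x + D := by
  obtain ⟨⟨-, hnonneg, hmono, -, -⟩, c, hc, R₀, hsub⟩ := ha
  refine ⟨a (max C R₀) + c + a (C + R₀), fun x => ?_⟩
  rcases le_or_gt R₀ x with hx | hx
  · have := hsub (max C R₀) (le_max_right _ _) x hx
    have := hmono (add_le_add_left (le_max_left C R₀) x)
    linarith [hnonneg (C + R₀)]
  · have := hmono (add_le_add_right hx.le C)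
    linarith [hnonneg x, hnonneg (max C R₀)]

lemma ClassL1.exists_apply_log_log_log_le (ha : ClassL1 a) {δ K : ℝ} (hδ : 1 < δ) (hK : 1 ≤ K) :
    ∃ D, ∀ m x : ℝ, 0 ≤ x → δ ≤ m → log m ≤ K * (1 + x) →
      a (log (log (log m))) ≤ a (log (log x)) + D := by
  obtain ⟨D, hD⟩ := ha.exists_add_le (log (|log (log δ)| + log (2 * K) + 1))
  obtain ⟨⟨-, hnonneg, hmono, -, -⟩, -⟩ := ha
  refine ⟨D + a 0, fun m x hx hδm hm => ?_⟩
  have hW : exp 1 ≤ max x (exp 1) := le_max_right _ _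
  have hmW : log m ≤ 2 * K * max x (exp 1) := by
    nlinarith [le_max_left x (exp 1), add_one_le_exp 1]
  have hx' : a (log (log (max x (exp 1)))) ≤ a (log (log x)) + a 0 := by
    rcases le_total x (exp 1) with h | h
    · simp [max_eq_right h, hnonneg]
    · simp [max_eq_left h, hnonneg]
  calc a (log (log (log m)))
      ≤ a (log (|log (log δ)| + log (2 * K) + 1) + log (log (max x (exp 1)))) :=
        hmono (log_log_log_le_of_log_le_mul hδ (by linarith) hW hδm hmW)
    _ ≤ a (log (log x)) + (D + a 0) := by linarith [hD (log (log (max x (exp 1))))]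

lemma ClassL1.exists_apply_log_log_log_le_of_le_one_sub_mul (ha : ClassL1 a) {m₀ c : ℝ}
    (hm₀ : 0 < m₀) (hc : 0 < c) :
    ∃ D, ∀ m t : ℝ, 0 < t → t ≤ exp (-1) → m₀ ≤ m → m ≤ 1 - c * t →
      a (log (log (log m))) ≤ a (log (log (1 / t))) + D := by
  obtain ⟨D, hD⟩ := ha.exists_add_le (log (|log c| + |log (-log m₀)| + 1))
  obtain ⟨⟨-, -, hmono, -, -⟩, -⟩ := ha
  exact ⟨D, fun m t ht ht1 hm₀m hm =>
    (hmono (log_log_log_le_of_le_one_sub_mul hm₀ hc ht ht1 hm₀m hm)).trans (hD _)⟩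

lemma tendsto_one_div_one_sub_nhdsLT : Tendsto (fun r : ℝ => 1 / (1 - r)) (𝓝[<] 1) atTop := by
  have h : Tendsto (fun r : ℝ => 1 - r) (𝓝[<] 1) (𝓝[>] 0) := by
    refine tendsto_nhdsWithin_of_tendsto_nhds_of_eventually_within _ ?_ ?_
    · simpa using ((tendsto_const_nhds (x := (1 : ℝ))).sub (tendsto_id (x := 𝓝 1))).mono_left
        nhdsWithin_le_nhds
    · filter_upwards [self_mem_nhdsWithin] with r (hr : r < 1)
      exact sub_pos.2 hr
  simpa [one_div, Function.comp_def] using tendsto_inv_nhdsGT_zero.comp h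

lemma tendsto_betaDen {b g : ℝ → ℝ} (hb : ClassL b) (hg : ClassL g) :
    Tendsto (betaDen b g) (𝓝[<] 1) atTop := by
  obtain ⟨-, -, -, -, hb⟩ := hb
  obtain ⟨-, -, -, -, hg⟩ := hg
  exact hb.comp (tendsto_log_atTop.comp (hg.comp tendsto_one_div_one_sub_nhdsLT))

end GrowthScale

lemma limsup_div_le_iSup_of_le_add {α ι : Type*} [Finite ι] {l : Filter α} {u w β : α → ℝ}
    {v : ι → α → ℝ} (hβ : ∀ᶠ r in l, 0 < β r) (hw : Tendsto (fun r => w r / β r) l (𝓝 0))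
    (h : ∀ᶠ r in l, ∃ i, u r ≤ v i r + w r) :
    limsup (fun r => ((u r / β r : ℝ) : EReal)) l ≤
      ⨆ i, limsup (fun r => ((v i r / β r : ℝ) : EReal)) l := by
  refine EReal.le_of_forall_lt_iff_le.1 fun q hq => ?_
  obtain ⟨q', hq', hq'q⟩ := EReal.exists_between_coe_real hq
  have hv : ∀ᶠ r in l, ∀ i, v i r / β r < q' := eventually_all.2 fun i =>
    (eventually_lt_of_limsup_lt ((le_iSup _ i).trans_lt hq')).mono fun _ hr => by
      exact_mod_cast hr
  have hw' : ∀ᶠ r in l, w r / β r < q - q' :=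
    hw.eventually (gt_mem_nhds (sub_pos.2 (by exact_mod_cast hq'q)))
  refine limsup_le_of_le (by isBoundedDefault) ?_
  filter_upwards [h, hβ, hv, hw'] with r ⟨i, hi⟩ hβr hvr hwr
  rw [EReal.coe_le_coe_iff]
  calc u r / β r ≤ v i r / β r + w r / β r := by
        rw [← add_div]; exact div_le_div_of_nonneg_right hi hβr.le
    _ ≤ q := by linarith [hvr i]

section OrderEstimates

open Finset

variable {a : ℝ → ℝ} {k : ℕ} {A : ℕ → ℂ → ℂ} {f : ℂ → ℂ}

lemma IsSolution.exists_apply_log_log_log_maxMod_le (ha : ClassL1 a) (hk : 0 < k)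
    (hA : ∀ j < k, DifferentiableOn ℂ (A j) (ball 0 1)) (hf : IsSolution k A f) {s : ℝ}
    (hs : s ∈ Ioo (0 : ℝ) 1) (hfs : 1 < maxMod f s) :
    ∃ D, ∀ r ∈ Ioo s 1, ∃ j : Fin k,
      a (log (log (log (maxMod f r)))) ≤ a (log (log (maxMod (A j) r))) + D := by
  set C := max ‖jet k f 0‖ 1
  have hC : 0 ≤ log C := log_nonneg (le_max_right _ _)
  obtain ⟨D, hD⟩ := ha.exists_apply_log_log_log_le (K := log C + 1 + k) hfs
    (by linarith [(Nat.cast_nonneg k : (0 : ℝ) ≤ k)])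
  refine ⟨D, fun r hr => ?_⟩
  obtain ⟨j, hj, hjmax⟩ := exists_max_image (range k) (fun j => maxMod (A j) r)
    (nonempty_range_iff.2 hk.ne')
  have hsr : maxMod f s ≤ maxMod f r := maxMod_mono hf.1.differentiableOn hs.1 hr.1.le hr.2
  refine ⟨⟨j, mem_range.1 hj⟩, hD _ _ (maxMod_nonneg _ _) hsr ?_⟩
  have hsum : ∑ i ∈ range k, maxMod (A i) r ≤ k * maxMod (A j) r := by
    simpa using sum_le_card_nsmul _ _ _ hjmax
  have hfr : maxMod f r ≤ C * exp (1 + ∑ i ∈ range k, maxMod (A i) r) :=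
    (hf.maxMod_le hk hA (hs.1.trans hr.1) hr.2).trans (by gcongr; exact le_max_left _ _)
  calc log (maxMod f r) ≤ log (C * exp (1 + ∑ i ∈ range k, maxMod (A i) r)) :=
        log_le_log (by linarith) hfr
    _ = log C + 1 + ∑ i ∈ range k, maxMod (A i) r := by
        rw [log_mul (by positivity) (exp_pos _).ne', log_exp]; ring
    _ ≤ (log C + 1 + k) * (1 + maxMod (A j) r) := by
        nlinarith [maxMod_nonneg (A j) r, (Nat.cast_nonneg k : (0 : ℝ) ≤ k)]

lemma exists_apply_log_log_log_maxMod_le_of_maxMod_le_one (ha : ClassL1 a)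
    (hf : DifferentiableOn ℂ f (ball 0 1)) (h1 : ∀ r ∈ Ioo (0 : ℝ) 1, maxMod f r ≤ 1)
    {z₀ : ℂ} (hz₀ : z₀ ∈ ball 0 1) (hfz₀ : f z₀ ≠ 0) :
    ∃ D, ∀ᶠ r in 𝓝[<] (1 : ℝ),
      a (log (log (log (maxMod f r)))) ≤ a (log (log (1 / (1 - r)))) + D := by
  have hle : ∀ z ∈ ball (0 : ℂ) 1, ‖f z‖ ≤ 1 := fun z hz => by
    have hz1 := mem_ball_zero_iff.1 hz
    have hs : (‖z‖ + 1) / 2 ∈ Ioo (0 : ℝ) 1 := ⟨by positivity, by linarith⟩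
    exact (norm_le_maxMod hf hs.1 hs.2 (by linarith)).trans (h1 _ hs)
  by_cases hone : ∃ z₁ ∈ ball (0 : ℂ) 1, ‖f z₁‖ = 1
  · -- `f` is a unimodular constant, so `log (log (log (maxMod f r))) = 0` as `Real.log 0 = 0`
    obtain ⟨z₁, hz₁, hfz₁⟩ := hone
    have hconst := Complex.eqOn_of_isPreconnected_of_isMaxOn_norm
      (convex_ball (0 : ℂ) 1).isPreconnected isOpen_ball hf hz₁
      (fun z hz => (hle z hz).trans hfz₁.ge)
    refine ⟨a 0, ?_⟩
    filter_upwards [Ioo_mem_nhdsLT (zero_lt_one' ℝ)] with r hr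
    rw [maxMod_eq_one (fun z hz => (congrArg norm (hconst hz)).trans hfz₁) hr.1 hr.2]
    simpa using ha.1.2.1 (log (log (1 / (1 - r))))
  · push Not at hone
    have hmaps : MapsTo f (ball 0 1) (ball 0 1) := fun z hz =>
      mem_ball_zero_iff.2 ((hle z hz).lt_of_ne (hone z hz))
    have hf0 : ‖f 0‖ < 1 := mem_ball_zero_iff.1 (hmaps (mem_ball_self one_pos))
    obtain ⟨D, hD⟩ := ha.exists_apply_log_log_log_le_of_le_one_sub_mul (c := (1 - ‖f 0‖) ^ 2 / 2)
      (norm_pos_iff.2 hfz₀) (by nlinarith)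
    refine ⟨D, ?_⟩
    have hz₀1 := mem_ball_zero_iff.1 hz₀
    have hr₀ : max ‖z₀‖ (1 - exp (-1)) < 1 := max_lt hz₀1 (by linarith [exp_pos (-1)])
    filter_upwards [Ioo_mem_nhdsLT hr₀] with r hr
    have hr0 : 0 < r := (norm_nonneg z₀).trans_lt ((le_max_left _ _).trans_lt hr.1)
    refine hD _ _ (by linarith [hr.2]) (by linarith [le_max_right ‖z₀‖ (1 - exp (-1)), hr.1])
      (norm_le_maxMod hf hr0 hr.2 ((le_max_left _ _).trans hr.1.le)) ?_
    have hc : (1 - ‖f 0‖) ^ 2 / 2 ≤ 1 := by nlinarith [norm_nonneg (f 0)]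
    refine maxMod_le (by nlinarith [hr.2]) fun z hz => ?_
    have := sq_one_sub_norm_mul_le_of_mapsTo_ball hf hmaps (hz.trans_lt hr.2)
    rw [hz] at this
    linarith

end OrderEstimates

theorem stmt9
    (a b g : ℝ → ℝ) (hscale : GrowthScale a b g)
    (k : ℕ) (hk : 2 ≤ k) (A : ℕ → ℂ → ℂ)
    (hA : ∀ j < k, AnalyticOnNhd ℂ (A j) (Metric.ball (0:ℂ) 1))
    (f : ℂ → ℂ) (hf : IsSolution k A f)
    (hf0 : ∃ z ∈ Metric.ball (0:ℂ) 1, f z ≠ 0) :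
    orderLogM a b g f ≤ ⨆ j : Fin k, orderM a b g (A j) := by
  obtain ⟨ha, hb, hg, hsmall, -, -⟩ := hscale
  have hβ := tendsto_betaDen hb.1 hg.1
  by_cases hbig : ∃ s ∈ Ioo (0 : ℝ) 1, 1 < maxMod f s
  · obtain ⟨s, hs, hfs⟩ := hbig
    obtain ⟨D, hD⟩ := hf.exists_apply_log_log_log_maxMod_le ha (by omega)
      (fun j hj => (hA j hj).differentiableOn) hs hfs
    refine limsup_div_le_iSup_of_le_add (w := fun _ => D) (hβ.eventually_gt_atTop 0)
      (tendsto_const_nhds.div_atTop hβ) ?_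
    filter_upwards [Ioo_mem_nhdsLT hs.2] with r hr using hD r hr
  · push Not at hbig
    obtain ⟨z₀, hz₀, hfz₀⟩ := hf0
    obtain ⟨D, hD⟩ := exists_apply_log_log_log_maxMod_le_of_maxMod_le_one ha
      hf.1.differentiableOn hbig hz₀ hfz₀
    have hw : Tendsto (fun r => (a (log (log (1 / (1 - r)))) + D) / betaDen b g r)
        (𝓝[<] 1) (𝓝 0) := by
      have h2 : Tendsto (fun r => a (log (log (1 / (1 - r)))) / betaDen b g r) (𝓝[<] 1) (𝓝 0) :=
        ((hsmall 2 le_rfl).comp_tendsto tendsto_one_div_one_sub_nhdsLT).tendsto_div_nhds_zero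
      simpa only [add_div, add_zero] using h2.add (tendsto_const_nhds.div_atTop hβ)
    refine limsup_div_le_iSup_of_le_add (ι := Fin k) (hβ.eventually_gt_atTop 0) hw ?_
    -- `α ≥ 0`, so the bound still holds after adding the term of `A 0`
    filter_upwards [hD] with r hr
    exact ⟨⟨0, by omega⟩, by linarith [ha.1.2.1 (log (log (maxMod (A 0) r)))]⟩
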